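/- Let G be a weighted multigraph of genus g, S ⊆ E(G), d a divisor with deg d + |S| = g, and h any positive polarization. Then the pair (S, d) is polystable (equivalently, since semistable = stable in degree g, stable) if and only if d is a break divisor on the graph G − S obtained by deleting the edges in S. -/

import Mathlib

open Finset

variable {V E : Type} [Fintype V] [Fintype E] [DecidableEq V] [DecidableEq E]

/-- Edges with both endpoints in `Y`. -/
def edgesIn (ends : E → V × V) (Y : Finset V) : Finset E :=
  univ.filter fun e => (ends e).1 ∈ Y ∧ (ends e).2 ∈ Y

/-- Edges with exactly one endpoint in `Y` (the cut `δ(Y)`). -/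
def cutEdges (ends : E → V × V) (Y : Finset V) : Finset E :=
  univ.filter fun e => Xor ((ends e).1 ∈ Y) ((ends e).2 ∈ Y)

/-- Arithmetic genus of the subgraph induced on `Y` with the edges of `S` removed:
`g(Y \ S) = |E(Y) \ S| - |Y| + 1 + Σ_{v ∈ Y} w v`. -/
def genusOf (ends : E → V × V) (w : V → ℕ) (Y : Finset V) (S : Finset E) : ℤ :=
  ((edgesIn ends Y) \ S).card - Y.card + 1 + ∑ v ∈ Y, (w v : ℤ)

/-- The right-hand side of the basic inequality for the pair `(S, d)`, the
polarization `h`, and the proper subcurve `Y`: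
`g(Y \ S) - 1 + (h(Y)/H)(deg d + |S| + 1 - g) + |δ(Y) \ S|`. -/
def basicBound (ends : E → V × V) (w : V → ℕ) (h : V → ℤ) (S : Finset E) (d : V → ℤ)
    (Y : Finset V) : ℚ :=
  (genusOf ends w Y S : ℚ) - 1
    + ((∑ v ∈ Y, (h v : ℚ)) / (∑ v, (h v : ℚ)))
        * ((∑ v, (d v : ℚ)) + S.card + 1 - (genusOf ends w univ ∅ : ℚ))
    + ((cutEdges ends Y) \ S).card

/-- The pair `(S, d)` is semistable with respect to the polarization `h`. -/
def Semistable (ends : E → V × V) (w : V → ℕ) (h : V → ℤ) (S : Finset E) (d : V → ℤ) : Prop :=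
  ∀ Y : Finset V, Y.Nonempty → Y ≠ univ →
    (∑ v ∈ Y, (d v : ℚ)) ≤ basicBound ends w h S d Y

/-- The pair `(S, d)` is stable with respect to the polarization `h`. -/
def Stable (ends : E → V × V) (w : V → ℕ) (h : V → ℤ) (S : Finset E) (d : V → ℤ) : Prop :=
  ∀ Y : Finset V, Y.Nonempty → Y ≠ univ →
    (∑ v ∈ Y, (d v : ℚ)) < basicBound ends w h S d Y

/-- The simple graph on the vertices of `G` in which two distinct vertices are adjacent
if some edge of the multigraph lying in `E₀` joins them. -/
def spanGraph (ends : E → V × V) (E₀ : Finset E) : SimpleGraph V where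
  Adj u v := u ≠ v ∧ ∃ e ∈ E₀, ends e = (u, v) ∨ ends e = (v, u)
  symm := ⟨by
    rintro a b ⟨hne, e, he, hor⟩
    exact ⟨hne.symm, e, he, hor.symm⟩⟩
  loopless := ⟨by rintro a ⟨hne, -⟩; exact hne rfl⟩

/-- The underlying simple graph of the multigraph `G - S` obtained by deleting the
edges in `S`. -/
def graphMinus (ends : E → V × V) (S : Finset E) : SimpleGraph V :=
  spanGraph ends (univ \ S)

/-- Number of connected components of the graph on the full vertex set with edge set `E₀`. -/
noncomputable def numCompOn (ends : E → V × V) (E₀ : Finset E) : ℕ :=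
  Nat.card (spanGraph ends E₀).ConnectedComponent

/-- `d` is a break divisor on the (possibly disconnected) multigraph with vertex set `V`
and edge set `E₀`: there is a spanning forest `T ⊆ E₀` (one spanning tree per connected
component) and an assignment `φ` of an endpoint to each edge of `E₀ \ T` with
`d = Σ_v g_v · v + Σ_{e ∈ E₀ \ T} φ(e)`. -/
noncomputable def IsBreakDivisorOn (ends : E → V × V) (w : V → ℕ) (E₀ : Finset E)
    (d : V → ℤ) : Prop :=
  ∃ T : Finset E, T ⊆ E₀ ∧ numCompOn ends T = numCompOn ends E₀ ∧
    T.card + numCompOn ends E₀ = Fintype.card V ∧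
    ∃ φ : E → V, (∀ e ∈ E₀ \ T, φ e = (ends e).1 ∨ φ e = (ends e).2) ∧
      ∀ v, d v = (w v : ℤ) + ((E₀ \ T).filter fun e => φ e = v).card

/-!
In degree `g` the polarization term of the basic inequality lies strictly between `0` and `1`, so
stability of `(S, d)` becomes the integral condition `d(Z) ≥ g(Z \ S)` for every proper nonempty
`Z`, the classical characterization of break divisors on `G - S`. A break divisor satisfies it
because a spanning tree has fewer than `|Z|` edges inside `Z`. Conversely, Hakimi's theorem (Hall's
theorem applied to `c v` slots at each vertex) orients `G - S` with in-degree `d - w + 1` away from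
a root `q` and `d - w` at `q`. The condition then forces every vertex to be reachable from `q` along
oriented edges; choosing for each `v ≠ q` an incoming edge from a vertex closer to `q` gives a
spanning tree, and the heads of the remaining edges add up to `d - w`.
-/

section Rank

variable {α : Type*} {r : α → α → Prop} {q : α}

def ReachIn (r : α → α → Prop) (q : α) : ℕ → α → Prop
  | 0 => fun v => v = q
  | n + 1 => fun v => ∃ u, ReachIn r q n u ∧ r u v

theorem exists_reachIn_of_reflTransGen {v : α} (h : Relation.ReflTransGen r q v) :
    ∃ n, ReachIn r q n v := by
  induction h with
  | refl => exact ⟨0, rfl⟩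
  | tail _ huv ih =>
    obtain ⟨n, hn⟩ := ih
    exact ⟨n + 1, _, hn, huv⟩

theorem exists_rank_of_forall_reflTransGen (h : ∀ v, Relation.ReflTransGen r q v) :
    ∃ rank : α → ℕ, ∀ v, v ≠ q → ∃ u, r u v ∧ rank u < rank v := by
  classical
  have hreach := fun v => exists_reachIn_of_reflTransGen (h v)
  refine ⟨fun v => Nat.find (hreach v), fun v hv => ?_⟩
  have hspec := Nat.find_spec (hreach v)
  obtain ⟨n, hn⟩ : ∃ n, Nat.find (hreach v) = n + 1 :=
    Nat.exists_eq_succ_of_ne_zero fun h0 => hv (by rw [h0] at hspec; exact hspec)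
  rw [hn] at hspec
  obtain ⟨u, hu, huv⟩ := hspec
  exact ⟨u, huv, (Nat.find_le hu).trans_lt (by dsimp only; omega)⟩

theorem reflTransGen_of_rank (rank : α → ℕ)
    (hrank : ∀ v, v ≠ q → ∃ u, r u v ∧ rank u < rank v) (v : α) :
    Relation.ReflTransGen r q v := by
  induction hn : rank v using Nat.strong_induction_on generalizing v with
  | _ n ih =>
    by_cases hv : v = q
    · exact hv ▸ .refl
    obtain ⟨u, huv, hu⟩ := hrank v hv
    exact (ih _ (hn ▸ hu) u rfl).tail huv

end Rank

theorem card_filter_mem_eq_sum_card_filter {α β : Type*} [DecidableEq β] (A : Finset α)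
    (f : α → β) (Y : Finset β) :
    (A.filter fun a => f a ∈ Y).card = ∑ b ∈ Y, (A.filter fun a => f a = b).card := by
  rw [card_eq_sum_card_fiberwise (s := A.filter fun a => f a ∈ Y) (t := Y)
    fun a ha => (mem_filter.1 ha).2]
  refine sum_congr rfl fun b hb => ?_
  rw [filter_filter]
  congr 1
  exact filter_congr fun a _ => ⟨And.right, fun hab => ⟨hab ▸ hb, hab⟩⟩

section Counting

variable (ends : E → V × V)

omit [Fintype V] [DecidableEq E] in
@[simp]
theorem mem_edgesIn {Y : Finset V} {e : E} :
    e ∈ edgesIn ends Y ↔ (ends e).1 ∈ Y ∧ (ends e).2 ∈ Y := by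
  simp [edgesIn]

omit [Fintype V] [DecidableEq E] in
@[simp]
theorem mem_cutEdges {Y : Finset V} {e : E} :
    e ∈ cutEdges ends Y ↔ Xor ((ends e).1 ∈ Y) ((ends e).2 ∈ Y) := by
  simp [cutEdges]

omit [DecidableEq E] in
@[simp]
theorem edgesIn_univ : edgesIn ends (univ : Finset V) = univ := by
  ext; simp

theorem card_inter_edgesIn_add_card_inter_cutEdges_add (A : Finset E) (Y : Finset V) :
    (A ∩ edgesIn ends Y).card + (A ∩ cutEdges ends Y).card + (A ∩ edgesIn ends Yᶜ).card
      = A.card := by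
  simp only [edgesIn, cutEdges, inter_filter, inter_univ, card_filter, ← sum_add_distrib,
    card_eq_sum_ones A]
  refine sum_congr rfl fun e _ => ?_
  by_cases h1 : (ends e).1 ∈ Y <;> by_cases h2 : (ends e).2 ∈ Y <;> simp [h1, h2]

theorem genusOf_add_card_cutEdges_add_genusOf_compl (w : V → ℕ) (S : Finset E) (Y : Finset V) :
    genusOf ends w Y S + ((cutEdges ends Y \ S).card : ℤ) + genusOf ends w Yᶜ S
      = genusOf ends w univ S + 1 := by
  have hpart := card_inter_edgesIn_add_card_inter_cutEdges_add ends Sᶜ Y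
  have hw := sum_add_sum_compl Y fun v => (w v : ℤ)
  have hY := card_compl Y
  have hYle := card_le_univ Y
  simp only [genusOf, sdiff_eq_inter_compl, inter_comm _ Sᶜ, edgesIn_univ, inter_univ,
    card_univ] at *
  push_cast [hY, hYle]
  omega

theorem genusOf_univ_add_card (w : V → ℕ) (S : Finset E) :
    genusOf ends w univ S + S.card = genusOf ends w univ ∅ := by
  have hS := card_compl_add_card S
  simp only [genusOf, edgesIn_univ, sdiff_empty, ← compl_eq_univ_sdiff, card_univ]
  push_cast [← hS]
  ring

omit [Fintype V] in
theorem genusOf_eq (w : V → ℕ) (S : Finset E) (Y : Finset V) :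
    genusOf ends w Y S
      = ((univ \ S) ∩ edgesIn ends Y).card - Y.card + 1 + ∑ v ∈ Y, (w v : ℤ) := by
  rw [genusOf, sdiff_eq_inter_compl, inter_comm, compl_eq_univ_sdiff]

end Counting

section Stability

theorem intCast_lt_sub_one_add_iff {a m : ℤ} {t : ℚ} (h0 : 0 < t) (h1 : t < 1) :
    (a : ℚ) < m - 1 + t ↔ a < m := by
  constructor
  · intro h
    by_contra! hma
    have : (m : ℚ) ≤ a := by exact_mod_cast hma
    linarith
  · intro h
    have : (a : ℚ) ≤ m - 1 := by exact_mod_cast Int.le_sub_one_of_lt h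
    linarith

variable (ends : E → V × V) (w : V → ℕ) (h : V → ℤ) (S : Finset E) (d : V → ℤ)

theorem sum_lt_basicBound_iff (hpos : ∀ v, 0 < h v)
    (hdeg : ∑ v, d v = genusOf ends w univ S) {Y : Finset V} (hY : Y.Nonempty)
    (hYu : Y ≠ univ) :
    ∑ v ∈ Y, (d v : ℚ) < basicBound ends w h S d Y ↔
      genusOf ends w Yᶜ S ≤ ∑ v ∈ Yᶜ, d v := by
  have hYc : Yᶜ.Nonempty := (compl_ne_univ_iff_nonempty Yᶜ).1 (by rwa [compl_compl])
  have hsplit := sum_add_sum_compl Y fun v => (h v : ℚ)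
  have hhY : 0 < ∑ v ∈ Y, (h v : ℚ) := sum_pos (fun v _ => by exact_mod_cast hpos v) hY
  have hhYc : 0 < ∑ v ∈ Yᶜ, (h v : ℚ) := sum_pos (fun v _ => by exact_mod_cast hpos v) hYc
  have hfactor : (∑ v, (d v : ℚ)) + S.card + 1 - (genusOf ends w univ ∅ : ℚ) = 1 := by
    rw [← genusOf_univ_add_card, ← hdeg]
    push_cast
    ring
  have hbound : basicBound ends w h S d Y
      = ((genusOf ends w Y S + (cutEdges ends Y \ S).card : ℤ) : ℚ) - 1
        + (∑ v ∈ Y, (h v : ℚ)) / ∑ v, (h v : ℚ) := by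
    rw [basicBound, hfactor]
    push_cast
    ring
  rw [hbound, ← Int.cast_sum,
    intCast_lt_sub_one_add_iff (div_pos hhY (by linarith))
      ((div_lt_one (by linarith)).2 (by linarith))]
  have hid := genusOf_add_card_cutEdges_add_genusOf_compl ends w S Y
  have hd := sum_add_sum_compl Y d
  omega

theorem stable_iff_forall_genusOf_le_sum (hpos : ∀ v, 0 < h v)
    (hdeg : ∑ v, d v = genusOf ends w univ S) :
    Stable ends w h S d ↔
      ∀ Z : Finset V, Z.Nonempty → Z ≠ univ → genusOf ends w Z S ≤ ∑ v ∈ Z, d v := by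
  have hcompl : ∀ Y : Finset V, Y.Nonempty → Y ≠ univ → Yᶜ.Nonempty ∧ Yᶜ ≠ univ :=
    fun Y hY hYu => ⟨(compl_ne_univ_iff_nonempty Yᶜ).1 (by rwa [compl_compl]),
      (compl_ne_univ_iff_nonempty Y).2 hY⟩
  constructor
  · intro hst Z hZ hZu
    obtain ⟨hY, hYu⟩ := hcompl Z hZ hZu
    simpa using (sum_lt_basicBound_iff ends w h S d hpos hdeg hY hYu).1 (hst _ hY hYu)
  · intro hL Y hY hYu
    obtain ⟨hZ, hZu⟩ := hcompl Y hY hYu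
    exact (sum_lt_basicBound_iff ends w h S d hpos hdeg hY hYu).2 (hL _ hZ hZu)

end Stability

section Trees

variable (ends : E → V × V)

omit [Fintype V] [Fintype E] [DecidableEq V] [DecidableEq E] in
def Joins (e : E) (u v : V) : Prop :=
  ends e = (u, v) ∨ ends e = (v, u)

omit [Fintype V] [Fintype E] [DecidableEq V] [DecidableEq E] in
theorem spanGraph_mono {T F : Finset E} (h : T ⊆ F) : spanGraph ends T ≤ spanGraph ends F :=
  fun _ _ ⟨hne, e, he, hj⟩ => ⟨hne, e, h he, hj⟩

omit [Fintype V] [Fintype E] [DecidableEq V] [DecidableEq E] in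
theorem numCompOn_eq_one_iff {F : Finset E} :
    numCompOn ends F = 1 ↔ (spanGraph ends F).Connected := by
  rw [numCompOn, Nat.card_eq_one_iff_unique, SimpleGraph.connected_iff]
  constructor
  · rintro ⟨hsub, ⟨c⟩⟩
    refine ⟨fun u v => SimpleGraph.ConnectedComponent.eq.1 (Subsingleton.elim _ _), ?_⟩
    induction c using SimpleGraph.ConnectedComponent.ind with
    | h v => exact ⟨v⟩
  · rintro ⟨hpre, ⟨v⟩⟩
    exact ⟨hpre.subsingleton_connectedComponent, ⟨SimpleGraph.connectedComponentMk _ v⟩⟩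

omit [Fintype V] [Fintype E] [DecidableEq V] [DecidableEq E] in
theorem injective_of_joins_of_rank_lt {q : V} (rank : V → ℕ) {par : {v // v ≠ q} → V}
    {pe : {v // v ≠ q} → E} (hjoin : ∀ v, Joins ends (pe v) (par v) v)
    (hrank : ∀ v, rank (par v) < rank v) : Function.Injective pe := by
  intro a b hab
  have hra := hrank a
  have hrb := hrank b
  have hb := hjoin b
  rw [← hab] at hb
  rcases hjoin a with ha | ha <;> rcases hb with hb | hb <;> rw [ha, Prod.mk.injEq] at hb
  · exact Subtype.ext hb.2
  · rw [hb.1] at hra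
    rw [← hb.2] at hrb
    omega
  · rw [hb.2] at hra
    rw [← hb.1] at hrb
    omega
  · exact Subtype.ext hb.1

/-- Rooting the spanning tree `T` at `q ∈ Z`, each edge of `T` is the parent edge of a unique
vertex `≠ q`, which lies in `Z` if the edge does. -/
theorem card_inter_edgesIn_lt_card {T : Finset E} (hT : (spanGraph ends T).Connected)
    (hcard : T.card + 1 = Fintype.card V) {Z : Finset V} (hZ : Z.Nonempty) :
    (T ∩ edgesIn ends Z).card < Z.card := by
  obtain ⟨q, hq⟩ := hZ
  obtain ⟨rank, hrank⟩ := exists_rank_of_forall_reflTransGen fun v =>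
    (SimpleGraph.reachable_iff_reflTransGen q v).1 (hT.preconnected q v)
  have hpar : ∀ v : {v // v ≠ q},
      ∃ u e, e ∈ T ∧ Joins ends e u v ∧ rank u < rank v := by
    intro v
    obtain ⟨u, ⟨-, e, he, hj⟩, hu⟩ := hrank v v.2
    exact ⟨u, e, he, hj, hu⟩
  choose par pe hpeT hjoin hlt using hpar
  have hinj := injective_of_joins_of_rank_lt ends rank hjoin hlt
  have himage : univ.image pe = T := by
    refine eq_of_subset_of_card_le (image_subset_iff.2 fun v _ => hpeT v) ?_
    rw [card_image_of_injective _ hinj, card_univ, Fintype.card_subtype_compl,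
      Fintype.card_subtype_eq]
    omega
  calc (T ∩ edgesIn ends Z).card
      ≤ ((univ.filter fun v : {v // v ≠ q} => v.1 ∈ Z).image pe).card := by
        refine card_le_card fun e he => ?_
        rw [mem_inter, ← himage, mem_image] at he
        obtain ⟨⟨v, -, rfl⟩, hvZ⟩ := he
        refine mem_image_of_mem pe (mem_filter.2 ⟨mem_univ _, ?_⟩)
        rcases hjoin v with h | h <;> rw [mem_edgesIn, h] at hvZ
        exacts [hvZ.2, hvZ.1]
    _ ≤ (Z.erase q).card := by
        refine card_image_le.trans (card_le_card_of_injOn Subtype.val (fun v hv => ?_)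
          Subtype.val_injective.injOn)
        exact mem_erase.2 ⟨v.2, (mem_filter.1 (mem_coe.1 hv)).2⟩
    _ < Z.card := card_erase_lt_of_mem hq

omit [Fintype V] [Fintype E] [DecidableEq V] [DecidableEq E] in
/-- `o` orients every edge `e` towards its endpoint `o e`. -/
def OrientedAdj (F : Finset E) (o : E → V) (u v : V) : Prop :=
  ∃ e ∈ F, o e = v ∧ Joins ends e u v

/-- The vertices unreachable from `q` only receive edges from among themselves. -/
theorem reflTransGen_of_card_inter_edgesIn_lt {F : Finset E} {o : E → V}
    (ho : ∀ e ∈ F, o e = (ends e).1 ∨ o e = (ends e).2) {q : V}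
    (hZ : ∀ Z : Finset V, Z.Nonempty → q ∉ Z →
      (F ∩ edgesIn ends Z).card < (F.filter fun e => o e ∈ Z).card) (v : V) :
    Relation.ReflTransGen (OrientedAdj ends F o) q v := by
  classical
  by_contra hv
  let Z := univ.filter fun v => ¬ Relation.ReflTransGen (OrientedAdj ends F o) q v
  have hqZ : q ∉ Z := by simp [Z, Relation.ReflTransGen.refl]
  have hsub : (F.filter fun e => o e ∈ Z) ⊆ F ∩ edgesIn ends Z := by
    intro e he
    obtain ⟨heF, hoZ⟩ := mem_filter.1 he
    have hclosed : ∀ u, Joins ends e u (o e) → u ∈ Z := fun u hu => by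
      simp only [Z, mem_filter, mem_univ, true_and] at hoZ ⊢
      exact fun hu' => hoZ (hu'.tail ⟨e, heF, rfl, hu⟩)
    refine mem_inter.2 ⟨heF, mem_edgesIn ends |>.2 ?_⟩
    rcases ho e heF with h | h
    · exact ⟨h ▸ hoZ, hclosed _ (Or.inr (by rw [h]))⟩
    · exact ⟨hclosed _ (Or.inl (by rw [h])), h ▸ hoZ⟩
  exact absurd (card_le_card hsub) (not_le.2 (hZ Z ⟨v, by simpa [Z] using hv⟩ hqZ))

omit [Fintype E] in
theorem exists_spanningTree_of_rank {F : Finset E} {o : E → V} {q : V} (rank : V → ℕ)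
    (hrank : ∀ v, v ≠ q → ∃ u, OrientedAdj ends F o u v ∧ rank u < rank v) :
    ∃ T ⊆ F, (spanGraph ends T).Connected ∧ T.card + 1 = Fintype.card V ∧
      ∀ v, (T.filter fun e => o e = v).card = if v ≠ q then 1 else 0 := by
  have hpar : ∀ v : {v // v ≠ q},
      ∃ u e, e ∈ F ∧ o e = v ∧ Joins ends e u v ∧ rank u < rank v := by
    intro v
    obtain ⟨u, ⟨e, he, hov, hj⟩, hu⟩ := hrank v v.2
    exact ⟨u, e, he, hov, hj, hu⟩
  choose par pe hpeF hpeo hjoin hlt using hpar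
  have hinj := injective_of_joins_of_rank_lt ends rank hjoin hlt
  refine ⟨univ.image pe, image_subset_iff.2 fun v _ => hpeF v, ?_, ?_, fun v => ?_⟩
  · refine (SimpleGraph.connected_iff_exists_forall_reachable _).2 ⟨q, fun v => ?_⟩
    refine (SimpleGraph.reachable_iff_reflTransGen q v).2 (reflTransGen_of_rank rank ?_ v)
    intro v hv
    exact ⟨par ⟨v, hv⟩, ⟨fun h => (hlt ⟨v, hv⟩).ne (congrArg rank h), pe ⟨v, hv⟩,
      mem_image_of_mem _ (mem_univ _), hjoin _⟩, hlt _⟩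
  · rw [card_image_of_injective _ hinj, card_univ, Fintype.card_subtype_compl,
      Fintype.card_subtype_eq]
    have := Fintype.card_pos_iff.2 ⟨q⟩
    omega
  · split_ifs with hv
    · refine card_eq_one.2 ⟨pe ⟨v, hv⟩, ?_⟩
      ext e
      simp only [mem_filter, mem_image, mem_univ, true_and, mem_singleton]
      constructor
      · rintro ⟨⟨u, rfl⟩, hu⟩
        rw [show u = ⟨v, hv⟩ from Subtype.ext ((hpeo u).symm.trans hu)]
      · rintro rfl
        exact ⟨⟨_, rfl⟩, hpeo _⟩
    · refine card_eq_zero.2 (filter_eq_empty_iff.2 ?_)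
      rintro e he rfl
      obtain ⟨u, -, rfl⟩ := mem_image.1 he
      exact u.2 ((hpeo u).symm.trans (not_not.1 hv))

end Trees

section Orientations

variable (ends : E → V × V)

omit [Fintype V] in
/-- By Hall's theorem, each edge of `F` picks one of the `c v` slots at one of its endpoints `v`,
injectively. -/
theorem exists_orientation_card_filter_le {F : Finset E} (c : V → ℕ)
    (hc : ∀ Z : Finset V, (F ∩ edgesIn ends Z).card ≤ ∑ v ∈ Z, c v) :
    ∃ o : E → V, (∀ e ∈ F, o e = (ends e).1 ∨ o e = (ends e).2) ∧
      ∀ v, (F.filter fun e => o e = v).card ≤ c v := by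
  let slots : Finset V → Finset (Σ _ : V, ℕ) := fun Z => Z.sigma fun v => range (c v)
  have hslots : ∀ Z, (slots Z).card = ∑ v ∈ Z, c v := by simp [slots]
  let t : F → Finset (Σ _ : V, ℕ) := fun e => slots {(ends e).1, (ends e).2}
  have hHall : ∀ s : Finset F, s.card ≤ (s.biUnion t).card := by
    intro s
    let Z := s.biUnion fun e => {(ends e).1, (ends e).2}
    have hbi : s.biUnion t = slots Z := by
      ext ⟨v, i⟩
      simp only [t, slots, Z, mem_biUnion, mem_sigma, ← exists_and_right, and_assoc]
    calc s.card = (s.map (Function.Embedding.subtype _)).card := (card_map _).symm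
      _ ≤ (F ∩ edgesIn ends Z).card := by
        refine card_le_card fun e he => ?_
        obtain ⟨e, hes, rfl⟩ := mem_map.1 he
        simp only [mem_inter, mem_edgesIn, Z, mem_biUnion]
        exact ⟨e.2, ⟨e, hes, by simp⟩, ⟨e, hes, by simp⟩⟩
      _ ≤ (s.biUnion t).card := by rw [hbi, hslots]; exact hc Z
  obtain ⟨f, hfinj, hft⟩ := (all_card_le_biUnion_card_iff_exists_injective t).1 hHall
  let o : E → V := fun e => if he : e ∈ F then (f ⟨e, he⟩).1 else (ends e).1
  have hends : ∀ e ∈ F, o e = (ends e).1 ∨ o e = (ends e).2 := by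
    intro e he
    have hmem := mem_sigma.1 (hft ⟨e, he⟩)
    simpa only [o, dif_pos he, mem_insert, mem_singleton] using hmem.1
  refine ⟨o, hends, fun v => ?_⟩
  rw [← sum_singleton c v, ← hslots]
  refine card_le_card_of_injOn (fun e => if he : e ∈ F then f ⟨e, he⟩ else ⟨v, 0⟩) ?_ ?_
  · intro e he
    obtain ⟨heF, rfl⟩ := mem_filter.1 (mem_coe.1 he)
    simp only [mem_coe, dif_pos heF, slots, mem_sigma, mem_singleton, o, true_and]
    exact (mem_sigma.1 (hft ⟨e, heF⟩)).2
  · intro a ha b hb hab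
    have haF := (mem_filter.1 (mem_coe.1 ha)).1
    have hbF := (mem_filter.1 (mem_coe.1 hb)).1
    simp only [dif_pos haF, dif_pos hbF] at hab
    exact congrArg Subtype.val (hfinj hab)

/-- Hakimi's orientation theorem. -/
theorem exists_orientation_of_card_le {F : Finset E} (c : V → ℕ)
    (hc : ∀ Z : Finset V, (F ∩ edgesIn ends Z).card ≤ ∑ v ∈ Z, c v)
    (hsum : ∑ v, c v = F.card) :
    ∃ o : E → V, (∀ e ∈ F, o e = (ends e).1 ∨ o e = (ends e).2) ∧
      ∀ v, (F.filter fun e => o e = v).card = c v := by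
  obtain ⟨o, ho, hle⟩ := exists_orientation_card_filter_le ends c hc
  refine ⟨o, ho, fun v => (sum_eq_sum_iff_of_le fun v _ => hle v).1 ?_ v (mem_univ v)⟩
  rw [hsum, ← card_eq_sum_card_fiberwise fun e _ => mem_coe.2 (mem_univ (o e))]

end Orientations

section BreakDivisor

variable (ends : E → V × V) (w : V → ℕ) (S : Finset E) (d : V → ℤ)

theorem genusOf_le_sum_of_isBreakDivisorOn (hdeg : ∑ v, d v = genusOf ends w univ S)
    (hd : IsBreakDivisorOn ends w (univ \ S) d) {Z : Finset V} (hZ : Z.Nonempty) :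
    genusOf ends w Z S ≤ ∑ v ∈ Z, d v := by
  obtain ⟨T, hTF, hcomp, hTcard, φ, hφ, hdφ⟩ := hd
  have hsum : ∀ Y : Finset V, ∑ v ∈ Y, d v
      = ∑ v ∈ Y, (w v : ℤ) + (((univ \ S) \ T).filter fun e => φ e ∈ Y).card := by
    intro Y
    rw [card_filter_mem_eq_sum_card_filter, sum_congr rfl fun v _ => hdφ v, sum_add_distrib]
    push_cast
    rfl
  have htree : T.card + 1 = Fintype.card V := by
    have h := hsum univ
    rw [hdeg, genusOf_eq ends w S, edgesIn_univ, inter_univ,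
      filter_true_of_mem fun e _ => mem_univ _, card_sdiff_of_subset hTF, card_univ] at h
    have := card_le_card hTF
    omega
  have hconn : (spanGraph ends T).Connected := (numCompOn_eq_one_iff ends).1 (by omega)
  have hforest := card_inter_edgesIn_lt_card ends hconn htree hZ
  have hcover : ((univ \ S) ∩ edgesIn ends Z) \ (T ∩ edgesIn ends Z)
      ⊆ ((univ \ S) \ T).filter fun e => φ e ∈ Z := by
    intro e he
    obtain ⟨heFZ, heTZ⟩ := mem_sdiff.1 he
    obtain ⟨heF, heZ⟩ := mem_inter.1 heFZ
    have heT : e ∉ T := fun h => heTZ (mem_inter.2 ⟨h, heZ⟩)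
    obtain ⟨hZ1, hZ2⟩ := (mem_edgesIn ends).1 heZ
    refine mem_filter.2 ⟨mem_sdiff.2 ⟨heF, heT⟩, ?_⟩
    rcases hφ e (mem_sdiff.2 ⟨heF, heT⟩) with h | h <;> rw [h]
    exacts [hZ1, hZ2]
  have h1 := le_card_sdiff (T ∩ edgesIn ends Z) ((univ \ S) ∩ edgesIn ends Z)
  have h2 := card_le_card hcover
  rw [hsum Z, genusOf_eq ends w S]
  omega

theorem exists_orientation_of_forall_genusOf_le (hdeg : ∑ v, d v = genusOf ends w univ S)
    (hL : ∀ Z : Finset V, Z.Nonempty → genusOf ends w Z S ≤ ∑ v ∈ Z, d v) (q : V) :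
    ∃ o : E → V, (∀ e ∈ univ \ S, o e = (ends e).1 ∨ o e = (ends e).2) ∧
      ∀ v, (((univ \ S).filter fun e => o e = v).card : ℤ)
        = d v - w v + if v ≠ q then 1 else 0 := by
  have hdw : ∀ v, (w v : ℤ) ≤ d v := fun v => by
    have := hL {v} (singleton_nonempty v)
    rw [genusOf_eq ends w S, sum_singleton, sum_singleton, card_singleton] at this
    omega
  -- every vertex but the root `q` will receive exactly one tree edge
  let c : V → ℕ := fun v => (d v - w v).toNat + if v ≠ q then 1 else 0
  have hcv : ∀ v, (c v : ℤ) = d v - w v + if v ≠ q then 1 else 0 := fun v => by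
    have := hdw v
    simp only [c]
    push_cast
    omega
  have hc : ∀ Z : Finset V,
      ((∑ v ∈ Z, c v : ℕ) : ℤ) = ∑ v ∈ Z, (d v - w v) + (Z.erase q).card := by
    intro Z
    push_cast [hcv, sum_add_distrib, sum_boole, filter_ne']
    rfl
  have hHall : ∀ Z : Finset V, ((univ \ S) ∩ edgesIn ends Z).card ≤ ∑ v ∈ Z, c v := by
    intro Z
    rcases Z.eq_empty_or_nonempty with rfl | hZ
    · simp [eq_empty_iff_forall_notMem]
    have hgen := hL Z hZ
    have hcZ := hc Z
    have herase := pred_card_le_card_erase (s := Z) (a := q)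
    rw [genusOf_eq ends w S, sum_sub_distrib] at *
    omega
  have hsum : ∑ v, c v = (univ \ S).card := by
    have hcV := hc univ
    rw [sum_sub_distrib, hdeg, genusOf_eq ends w S, edgesIn_univ, inter_univ,
      card_erase_of_mem (mem_univ q), card_univ] at hcV
    have := Fintype.card_pos_iff.2 ⟨q⟩
    omega
  obtain ⟨o, ho, hindeg⟩ := exists_orientation_of_card_le ends c hHall hsum
  exact ⟨o, ho, fun v => by rw [hindeg, hcv]⟩

theorem isBreakDivisorOn_of_forall_genusOf_le (hdeg : ∑ v, d v = genusOf ends w univ S)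
    (hL : ∀ Z : Finset V, Z.Nonempty → genusOf ends w Z S ≤ ∑ v ∈ Z, d v) :
    IsBreakDivisorOn ends w (univ \ S) d := by
  rcases isEmpty_or_nonempty V with hV | hV
  · rw [genusOf_eq ends w S] at hdeg
    simp at hdeg
    omega
  obtain ⟨q⟩ := hV
  obtain ⟨o, ho, hindeg⟩ := exists_orientation_of_forall_genusOf_le ends w S d hdeg hL q
  have hreach := reflTransGen_of_card_inter_edgesIn_lt ends ho (q := q) fun Z hZ hqZ => by
    have hgen := hL Z hZ
    rw [genusOf_eq ends w S] at hgen
    have hin : (((univ \ S).filter fun e => o e ∈ Z).card : ℤ)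
        = ∑ v ∈ Z, d v - ∑ v ∈ Z, (w v : ℤ) + Z.card := by
      rw [card_filter_mem_eq_sum_card_filter, Nat.cast_sum,
        sum_congr rfl fun v hv => by rw [hindeg, if_pos (ne_of_mem_of_not_mem hv hqZ)]]
      simp [sum_add_distrib, sum_sub_distrib]
    omega
  obtain ⟨rank, hrank⟩ := exists_rank_of_forall_reflTransGen hreach
  obtain ⟨T, hTF, hconn, hcard, hTindeg⟩ := exists_spanningTree_of_rank ends rank hrank
  have hFconn : (spanGraph ends (univ \ S)).Connected :=
    hconn.mono (spanGraph_mono ends hTF)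
  have hone := (numCompOn_eq_one_iff ends).2 hFconn
  refine ⟨T, hTF, by rw [hone, (numCompOn_eq_one_iff ends).2 hconn], by rw [hone, hcard], o,
    fun e he => ho e (mem_sdiff.1 he).1, fun v => ?_⟩
  have hsplit : ((univ \ S).filter fun e => o e = v).card
      = (((univ \ S) \ T).filter fun e => o e = v).card + (T.filter fun e => o e = v).card := by
    rw [← card_union_of_disjoint (disjoint_filter_filter sdiff_disjoint), ← filter_union,
      sdiff_union_of_subset hTF]
  have := hindeg v
  have := hTindeg v
  split_ifs at * <;> omega

theorem isBreakDivisorOn_iff_forall_genusOf_le_sum (hdeg : ∑ v, d v = genusOf ends w univ S) :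
    IsBreakDivisorOn ends w (univ \ S) d ↔
      ∀ Z : Finset V, Z.Nonempty → Z ≠ univ → genusOf ends w Z S ≤ ∑ v ∈ Z, d v := by
  refine ⟨fun hd Z hZ _ => genusOf_le_sum_of_isBreakDivisorOn ends w S d hdeg hd hZ,
    fun hL => isBreakDivisorOn_of_forall_genusOf_le ends w S d hdeg fun Z hZ => ?_⟩
  by_cases hZu : Z = univ
  · rw [hZu, hdeg]
  · exact hL Z hZ hZu

end BreakDivisor

/-- Lemma 5.9.  For `deg d + |S| = g`, the pair `(S, d)` is polystable
(equivalently, stable, since in degree `g` semistable = stable) with respect to any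
positive polarization `h` if and only if `d` is a break divisor on `G - S`. -/
theorem stmt6 (ends : E → V × V) (w : V → ℕ) (d : V → ℤ) (h : V → ℤ)
    (hpos : ∀ v, 0 < h v) (S : Finset E)
    (hdeg : (∑ v, d v) + S.card = genusOf ends w univ ∅) :
    Stable ends w h S d ↔ IsBreakDivisorOn ends w (univ \ S) d := by
  have hdeg' : ∑ v, d v = genusOf ends w univ S := by
    have := genusOf_univ_add_card ends w S
    omega
  rw [stable_iff_forall_genusOf_le_sum ends w h S d hpos hdeg',
    isBreakDivisorOn_iff_forall_genusOf_le_sum ends w S d hdeg']
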